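/- Let N be a finitely generated module over a Noetherian ring R with injective resolution taken minimal, and let M be a finitely generated R-module with Supp(M) ∩ Supp(N) ⊆ V(a). Then Hom_R(M, E^i) is a-torsion for each term E^i of a minimal injective resolution of N. -/

import Mathlib

/-!
Each term `Eⁱ` of a minimal injective resolution is an essential extension of the image of the
previous differential, and an essential extension has no new associated primes. Since the
support of a module over a Noetherian ring consists of the primes containing an associated prime,
this gives `Supp Eⁱ ⊆ Supp N` by induction on `i`. The image of `f : M → Eⁱ` is then a
finitely generated module supported in `Supp M ∩ Supp N ⊆ V(a)`, so a power of `a`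
annihilates it.
-/

open CategoryTheory Limits Opposite

universe u

noncomputable section

variable (R : Type u) [CommRing R]

/-- A Serre subcategory of the category of `R`-modules, described as a predicate on
`ModuleCat R` closed under isomorphisms, submodules, quotients and extensions. -/
structure SerreClass : Type (u + 1) where
  mem : ModuleCat.{u} R → Prop
  mem_of_iso : ∀ {X Y : ModuleCat.{u} R}, (X ≅ Y) → mem X → mem Y
  mem_submodule : ∀ (X : ModuleCat.{u} R) (A : Submodule R X), mem X → mem (ModuleCat.of R A)
  mem_quotient : ∀ (X : ModuleCat.{u} R) (A : Submodule R X), mem X →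
    mem (ModuleCat.of R (X ⧸ A))
  mem_of_extension : ∀ (X : ModuleCat.{u} R) (A : Submodule R X),
    mem (ModuleCat.of R A) → mem (ModuleCat.of R (X ⧸ A)) → mem X

/-- A Melkersson subcategory: a Serre subcategory such that, for every ideal `b` and every
`b`-torsion module `X`, if `(0 :_X b)` belongs to the class then so does `X`. -/
structure MelkerssonClass extends SerreClass R where
  mem_of_torsion : ∀ (b : Ideal R) (X : ModuleCat.{u} R),
    (∀ x : X, ∃ n : ℕ, ∀ r ∈ b ^ n, r • x = 0) →
    mem (ModuleCat.of R (Submodule.torsionBySet R X (b : Set R))) → mem X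

variable (a : Ideal R) (M N : Type u) [AddCommGroup M] [Module R M]
  [AddCommGroup N] [Module R N]

/-- `M ⧸ aⁿM` as an object of `ModuleCat R`. -/
abbrev ModQuotPow (n : ℕ) : ModuleCat.{u} R :=
  ModuleCat.of R (M ⧸ (a ^ n • ⊤ : Submodule R M))

/-- The canonical projection `M ⧸ aⁿ⁺¹M → M ⧸ aⁿM`. -/
def modQuotPowHom (n : ℕ) : ModQuotPow R a M (n + 1) ⟶ ModQuotPow R a M n :=
  ModuleCat.ofHom (Submodule.mapQ _ _ LinearMap.id
    (by
      refine le_trans (Submodule.smul_mono (Ideal.pow_le_pow_right (Nat.le_succ n)) le_rfl) ?_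
      rw [Submodule.comap_id]))

/-- The direct system `n ↦ Extⁱ(M ⧸ aⁿM, N)`. -/
def glcDiagram (i : ℕ) : ℕ ⥤ ModuleCat.{u} R :=
  Functor.ofSequence
    (X := fun n => ((Ext R (ModuleCat.{u} R) i).obj (op (ModQuotPow R a M n))).obj
      (ModuleCat.of R N))
    (fun n => ((Ext R (ModuleCat.{u} R) i).map (modQuotPowHom R a M n).op).app
      (ModuleCat.of R N))

/-- The `i`-th generalized local cohomology module
`Hⁱ_a(M, N) = colim_n Extⁱ(M ⧸ aⁿM, N)`. -/
def glc (i : ℕ) : ModuleCat.{u} R :=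
  colimit (glcDiagram R a M N i)

/-- `M` has projective dimension at most `n`: all Ext-groups `Extⁱ(M, -)` with `i > n` vanish. -/
def projDimLE (n : ℕ) : Prop :=
  ∀ i : ℕ, n < i → ∀ X : ModuleCat.{u} R,
    Subsingleton (((Ext R (ModuleCat.{u} R) i).obj (op (ModuleCat.of R M))).obj X)

/-- The Serre cohomological dimension `cd_{(a,S)}(M,N)`, an element of `WithBot ℕ∞`
(with `sup ∅ = ⊥ = -∞`). -/
def serreCD (S : SerreClass R) : WithBot ℕ∞ :=
  sSup ((fun i : ℕ => ((i : ℕ∞) : WithBot ℕ∞)) '' {i : ℕ | ¬ S.mem (glc R a M N i)})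

section

variable {R}

def Submodule.IsEssential {E : Type*} [AddCommGroup E] [Module R E] (K : Submodule R E) : Prop :=
  ∀ B : Submodule R E, B ⊓ K = ⊥ → B = ⊥

variable {E F : Type*} [AddCommGroup E] [Module R E] [AddCommGroup F] [Module R F]

open Submodule in
theorem IsAssociatedPrime.of_isEssential [IsNoetherianRing R] {q : Ideal R} {K : Submodule R E}
    (hK : K.IsEssential) (hq : IsAssociatedPrime q E) : IsAssociatedPrime q K := by
  obtain ⟨hprime, x, rfl⟩ := isAssociatedPrime_iff.mp hq
  have hx : x ≠ 0 := by
    rintro rfl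
    exact hprime.ne_top (by ext; simp [mem_colon_singleton])
  obtain ⟨y, hy, hy0⟩ := exists_mem_ne_zero_of_ne_bot
    (fun h ↦ hx (span_singleton_eq_bot.mp (hK _ h)) : (R ∙ x) ⊓ K ≠ ⊥)
  obtain ⟨hyx, hyK⟩ := mem_inf.mp hy
  obtain ⟨r, rfl⟩ := mem_span_singleton.mp hyx
  have hr : r ∉ colon ⊥ {x} := by simpa [mem_colon_singleton] using hy0
  refine isAssociatedPrime_iff.mpr ⟨hprime, ⟨r • x, hyK⟩, ?_⟩
  ext s
  have hsr : s * r ∈ colon ⊥ {x} ↔ s ∈ colon ⊥ {x} := by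
    rw [hprime.mul_mem_iff_mem_or_mem, or_iff_left hr]
  rw [← hsr, mem_colon_singleton, mem_colon_singleton, mem_bot, mem_bot, mul_smul,
    ← Subtype.val_inj]
  rfl

theorem Module.mem_support_of_isAssociatedPrime_le {p : PrimeSpectrum R} {q : Ideal R}
    (hq : IsAssociatedPrime q E) (hqp : q ≤ p.asIdeal) : p ∈ Module.support R E := by
  obtain ⟨-, x, rfl⟩ := hq
  refine Module.mem_support_iff'.mpr ⟨x, fun r hr hrx ↦ hr (hqp (Ideal.le_radical ?_))⟩
  simpa [Submodule.mem_colon_singleton] using hrx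

theorem Module.exists_isAssociatedPrime_le_of_mem_support [IsNoetherianRing R]
    {p : PrimeSpectrum R} (hp : p ∈ Module.support R E) :
    ∃ q, IsAssociatedPrime q E ∧ q ≤ p.asIdeal := by
  have : Nontrivial (LocalizedModule p.asIdeal.primeCompl E) := Module.mem_support_iff.mp hp
  obtain ⟨Q, hQ⟩ := associatedPrimes.nonempty (Localization.AtPrime p.asIdeal)
    (LocalizedModule p.asIdeal.primeCompl E)
  have hQ_prime : Q.IsPrime := hQ.isPrime
  rw [← associatedPrimes.preimage_comap_associatedPrimes_eq_associatedPrimes_of_isLocalizedModule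
    p.asIdeal.primeCompl _ (LocalizedModule.mkLinearMap p.asIdeal.primeCompl E)] at hQ
  refine ⟨_, hQ, ?_⟩
  calc Q.comap _ ≤ (IsLocalRing.maximalIdeal _).comap _ :=
        Ideal.comap_mono (IsLocalRing.le_maximalIdeal hQ_prime.ne_top)
    _ = p.asIdeal := Localization.AtPrime.under_maximalIdeal

theorem Module.support_subset_of_isEssential [IsNoetherianRing R] {K : Submodule R E}
    (hK : K.IsEssential) : Module.support R E ⊆ Module.support R K := fun _ hp ↦
  have ⟨_, hq, hqp⟩ := Module.exists_isAssociatedPrime_le_of_mem_support hp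
  Module.mem_support_of_isAssociatedPrime_le (hq.of_isEssential hK) hqp

theorem Module.support_subset_of_isEssential_range [IsNoetherianRing R] {g : F →ₗ[R] E}
    (hg : (LinearMap.range g).IsEssential) : Module.support R E ⊆ Module.support R F :=
  (Module.support_subset_of_isEssential hg).trans
    (Module.support_subset_of_surjective _ g.surjective_rangeRestrict)

theorem CategoryTheory.InjectiveResolution.support_X_subset [IsNoetherianRing R]
    {Z : ModuleCat.{u} R} (I : InjectiveResolution Z)
    (hmin : ∀ i, (LinearMap.ker (I.cocomplex.d i (i + 1)).hom).IsEssential) (i : ℕ) :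
    Module.support R (I.cocomplex.X i) ⊆ Module.support R Z := by
  induction i with
  | zero =>
    have hess := hmin 0
    rw [← I.exact₀.moduleCat_range_eq_ker] at hess
    rw [← (HomologicalComplex.singleObjXSelf (ComplexShape.up ℕ) 0 Z).toLinearEquiv.support_eq]
    exact Module.support_subset_of_isEssential_range hess
  | succ i ih =>
    have hess := hmin (i + 1)
    rw [← (I.exact_succ i).moduleCat_range_eq_ker] at hess
    exact (Module.support_subset_of_isEssential_range hess).trans ih

theorem Module.exists_pow_le_annihilator_of_support_subset [IsNoetherianRing R] [Module.Finite R E]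
    {b : Ideal R} (h : Module.support R E ⊆ PrimeSpectrum.zeroLocus b) :
    ∃ k : ℕ, b ^ k ≤ Module.annihilator R E := by
  rw [Module.support_eq_zeroLocus, PrimeSpectrum.zeroLocus_subset_zeroLocus_iff] at h
  obtain ⟨k, hk⟩ :=
    Ideal.exists_radical_pow_le_of_fg (Module.annihilator R E) (IsNoetherian.noetherian _)
  exact ⟨k, (Ideal.pow_right_mono h k).trans hk⟩

end

theorem stmt19 [IsNoetherianRing R] [Module.Finite R M]
    (h : Module.support R M ∩ Module.support R N ⊆ PrimeSpectrum.zeroLocus (a : Set R))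
    (I : InjectiveResolution (ModuleCat.of R N))
    (hmin : ∀ i : ℕ, ∀ B : Submodule R (I.cocomplex.X i),
      B ⊓ LinearMap.ker (I.cocomplex.d i (i + 1)).hom = ⊥ → B = ⊥) :
    ∀ i : ℕ, ∀ f : M →ₗ[R] I.cocomplex.X i,
      ∃ k : ℕ, ∀ r ∈ a ^ k, r • f = 0 := by
  intro i f
  have hsupp_M : Module.support R (LinearMap.range f) ⊆ Module.support R M :=
    Module.support_subset_of_surjective _ f.surjective_rangeRestrict
  have hsupp_N : Module.support R (LinearMap.range f) ⊆ Module.support R N :=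
    (Module.support_subset_of_injective _ (LinearMap.range f).injective_subtype).trans
      (I.support_X_subset hmin i)
  obtain ⟨k, hk⟩ := Module.exists_pow_le_annihilator_of_support_subset
    fun p hp ↦ h ⟨hsupp_M hp, hsupp_N hp⟩
  exact ⟨k, fun r hr ↦ LinearMap.ext fun m ↦
    congrArg Subtype.val (Module.mem_annihilator.mp (hk hr) ⟨f m, f.mem_range_self m⟩)⟩
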